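/- arXiv:1708.02430 — 7 statements merged into one kernel-verified Lean document; each statement's English description precedes it below -/
import Mathlib

section
/- Let m, n be positive integers and let M be a real 4m×4n matrix that is JRS-symmetric. Then there exist real m×n matrices M₀, M₁, M₂, M₃ such that M has the block partitioning M = [[M₀, M₂, M₁, M₃], [−M₂, M₀, M₃, −M₁], [−M₁, −M₃, M₀, M₂], [−M₃, M₁, −M₂, M₀]]. -/
open Matrix Quaternion
open scoped Kronecker Quaternion

noncomputable section

/-- The 4×4 coefficient matrix of `J`. -/
def Jb : Matrix (Fin 4) (Fin 4) ℝ := !![0,0,-1,0; 0,0,0,-1; 1,0,0,0; 0,1,0,0]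
/-- The 4×4 coefficient matrix of `R`. -/
def Rb : Matrix (Fin 4) (Fin 4) ℝ := !![0,-1,0,0; 1,0,0,0; 0,0,0,1; 0,0,-1,0]
/-- The 4×4 coefficient matrix of `S`. -/
def Sb : Matrix (Fin 4) (Fin 4) ℝ := !![0,0,0,-1; 0,0,1,0; 0,-1,0,0; 1,0,0,0]

/-- `J_n = [[0,0,−I_n,0],[0,0,0,−I_n],[I_n,0,0,0],[0,I_n,0,0]]`. -/
def JJ (n : ℕ) : Matrix (Fin 4 × Fin n) (Fin 4 × Fin n) ℝ :=
  Jb ⊗ₖ (1 : Matrix (Fin n) (Fin n) ℝ)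
/-- `R_n = [[0,−I_n,0,0],[I_n,0,0,0],[0,0,0,I_n],[0,0,−I_n,0]]`. -/
def RRm (n : ℕ) : Matrix (Fin 4 × Fin n) (Fin 4 × Fin n) ℝ :=
  Rb ⊗ₖ (1 : Matrix (Fin n) (Fin n) ℝ)
/-- `S_n = [[0,0,0,−I_n],[0,0,I_n,0],[0,−I_n,0,0],[I_n,0,0,0]]`. -/
def SSm (n : ℕ) : Matrix (Fin 4 × Fin n) (Fin 4 × Fin n) ℝ :=
  Sb ⊗ₖ (1 : Matrix (Fin n) (Fin n) ℝ)

/-- A real 4m×4n matrix `M` is JRS-symmetric if `J_m M J_nᵀ = M`,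
`R_m M R_nᵀ = M` and `S_m M S_nᵀ = M`. -/
def JRSSymmetric {m n : ℕ} (M : Matrix (Fin 4 × Fin m) (Fin 4 × Fin n) ℝ) : Prop :=
  JJ m * M * (JJ n)ᵀ = M ∧ RRm m * M * (RRm n)ᵀ = M ∧ SSm m * M * (SSm n)ᵀ = M

/-- A real 4m×4n matrix `O` is JRS-symplectic if `O J_n Oᵀ = J_m`,
`O R_n Oᵀ = R_m` and `O S_n Oᵀ = S_m`. -/
def JRSSymplectic {m n : ℕ} (O : Matrix (Fin 4 × Fin m) (Fin 4 × Fin n) ℝ) : Prop :=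
  O * JJ n * Oᵀ = JJ m ∧ O * RRm n * Oᵀ = RRm m ∧ O * SSm n * Oᵀ = SSm m

/-- A real 4n×4n matrix is orthogonally JRS-symplectic if it is orthogonal
and JRS-symplectic. -/
def OrthoJRSSymplectic {n : ℕ} (W : Matrix (Fin 4 × Fin n) (Fin 4 × Fin n) ℝ) : Prop :=
  Wᵀ * W = 1 ∧ JRSSymplectic W

/-- The 4m×4n block matrix
`[[Q₀,Q₂,Q₁,Q₃],[−Q₂,Q₀,Q₃,−Q₁],[−Q₁,−Q₃,Q₀,Q₂],[−Q₃,Q₁,−Q₂,Q₀]]`. -/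
def upsilonBlocks {m n : ℕ} (Q0 Q1 Q2 Q3 : Matrix (Fin m) (Fin n) ℝ) :
    Matrix (Fin 4 × Fin m) (Fin 4 × Fin n) ℝ := fun p q =>
  !![Q0 p.2 q.2, Q2 p.2 q.2, Q1 p.2 q.2, Q3 p.2 q.2;
     -(Q2 p.2 q.2), Q0 p.2 q.2, Q3 p.2 q.2, -(Q1 p.2 q.2);
     -(Q1 p.2 q.2), -(Q3 p.2 q.2), Q0 p.2 q.2, Q2 p.2 q.2;
     -(Q3 p.2 q.2), Q1 p.2 q.2, -(Q2 p.2 q.2), Q0 p.2 q.2] p.1 q.1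

/-- The real counterpart `Υ_Q` of a quaternion matrix `Q`. -/
def Upsilon {m n : ℕ} (Q : Matrix (Fin m) (Fin n) ℍ[ℝ]) :
    Matrix (Fin 4 × Fin m) (Fin 4 × Fin n) ℝ :=
  upsilonBlocks (fun i j => (Q i j).re) (fun i j => (Q i j).imI)
    (fun i j => (Q i j).imJ) (fun i j => (Q i j).imK)

/-- Upper Hessenberg: zero below the first subdiagonal. -/
def UpperHessenbergM {n : ℕ} (A : Matrix (Fin n) (Fin n) ℝ) : Prop :=
  ∀ i j : Fin n, (j : ℕ) + 1 < (i : ℕ) → A i j = 0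

/-- Upper triangular: zero below the diagonal. -/
def UpperTriangularM {m n : ℕ} (A : Matrix (Fin m) (Fin n) ℝ) : Prop :=
  ∀ (i : Fin m) (j : Fin n), (j : ℕ) < (i : ℕ) → A i j = 0

/-- Strictly upper triangular: zero on and below the diagonal. -/
def StrictlyUpperTriangularM {m n : ℕ} (A : Matrix (Fin m) (Fin n) ℝ) : Prop :=
  ∀ (i : Fin m) (j : Fin n), (j : ℕ) ≤ (i : ℕ) → A i j = 0

/-- Tridiagonal: zero outside the three central diagonals. -/
def TridiagonalM {n : ℕ} (A : Matrix (Fin n) (Fin n) ℝ) : Prop :=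
  ∀ i j : Fin n, ((i : ℕ) + 1 < (j : ℕ) ∨ (j : ℕ) + 1 < (i : ℕ)) → A i j = 0

lemma kron_conj_entry {m n : ℕ} (A B : Matrix (Fin 4) (Fin 4) ℝ)
    (M : Matrix (Fin 4 × Fin m) (Fin 4 × Fin n) ℝ) (a b : Fin 4) (i : Fin m) (j : Fin n) :
    ((A ⊗ₖ (1 : Matrix (Fin m) (Fin m) ℝ)) * M * (B ⊗ₖ (1 : Matrix (Fin n) (Fin n) ℝ))ᵀ) (a,i) (b,j)
      = ∑ c : Fin 4, ∑ d : Fin 4, A a c * B b d * M (c,i) (d,j) := by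
  simp [Matrix.mul_apply, Fintype.sum_prod_type, Matrix.kroneckerMap_apply,
    Matrix.one_apply, Finset.mul_sum, Finset.sum_mul, mul_ite, ite_mul]
  rw [Finset.sum_comm]
  exact Finset.sum_congr rfl fun c _ => Finset.sum_congr rfl fun d _ => by ring

/-- Every JRS-symmetric real 4m×4n matrix has the block
partitioning `[[M₀,M₂,M₁,M₃],[−M₂,M₀,M₃,−M₁],[−M₁,−M₃,M₀,M₂],[−M₃,M₁,−M₂,M₀]]`. -/
theorem jrs_symmetric_block_partition {m n : ℕ} (hm : 0 < m) (hn : 0 < n)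
    (M : Matrix (Fin 4 × Fin m) (Fin 4 × Fin n) ℝ) (hM : JRSSymmetric M) :
    ∃ M0 M1 M2 M3 : Matrix (Fin m) (Fin n) ℝ, M = upsilonBlocks M0 M1 M2 M3 := by
  obtain ⟨h1, h2, h3⟩ := hM
  refine ⟨fun i j => M (0,i) (0,j), fun i j => M (0,i) (2,j),
    fun i j => M (0,i) (1,j), fun i j => M (0,i) (3,j), ?_⟩
  ext ⟨a,i⟩ ⟨b,j⟩
  have hJ : ∀ a b : Fin 4, (∑ c : Fin 4, ∑ d : Fin 4, Jb a c * Jb b d * M (c,i) (d,j))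
      = M (a,i) (b,j) := fun a b =>
    (kron_conj_entry Jb Jb M a b i j).symm.trans (congrFun (congrFun h1 (a,i)) (b,j))
  have hR : ∀ a b : Fin 4, (∑ c : Fin 4, ∑ d : Fin 4, Rb a c * Rb b d * M (c,i) (d,j))
      = M (a,i) (b,j) := fun a b =>
    (kron_conj_entry Rb Rb M a b i j).symm.trans (congrFun (congrFun h2 (a,i)) (b,j))
  have hS : ∀ a b : Fin 4, (∑ c : Fin 4, ∑ d : Fin 4, Sb a c * Sb b d * M (c,i) (d,j))
      = M (a,i) (b,j) := fun a b =>
    (kron_conj_entry Sb Sb M a b i j).symm.trans (congrFun (congrFun h3 (a,i)) (b,j))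
  fin_cases a <;> fin_cases b <;> simp only [upsilonBlocks]
  · simp
  · simp
  · simp
  · simp
  · have h := hR 1 0; simp [Rb, Fin.sum_univ_four] at h; simp; linarith
  · have h := hR 1 1; simp [Rb, Fin.sum_univ_four] at h; simp; linarith
  · have h := hR 1 2; simp [Rb, Fin.sum_univ_four] at h; simp; linarith
  · have h := hR 1 3; simp [Rb, Fin.sum_univ_four] at h; simp; linarith
  · have h := hJ 2 0; simp [Jb, Fin.sum_univ_four] at h; simp; linarith
  · have h := hJ 2 1; simp [Jb, Fin.sum_univ_four] at h; simp; linarith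
  · have h := hJ 2 2; simp [Jb, Fin.sum_univ_four] at h; simp; linarith
  · have h := hJ 2 3; simp [Jb, Fin.sum_univ_four] at h; simp; linarith
  · have h := hS 3 0; simp [Sb, Fin.sum_univ_four] at h; simp; linarith
  · have h := hS 3 1; simp [Sb, Fin.sum_univ_four] at h; simp; linarith
  · have h := hS 3 2; simp [Sb, Fin.sum_univ_four] at h; simp; linarith
  · have h := hS 3 3; simp [Sb, Fin.sum_univ_four] at h; simp; linarith
end
end

section
/- Let m, n be positive integers. A real 4m×4n matrix M is JRS-symmetric if and only if M is the real counterpart of some quaternion matrix, i.e., if and only if there exists a quaternion matrix Q ∈ ℍ^{m×n} such that M = Υ_Q. -/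
open Matrix Quaternion
open scoped Kronecker Quaternion

noncomputable section

lemma conj_apply {m n : ℕ} (A B : Matrix (Fin 4) (Fin 4) ℝ)
    (M : Matrix (Fin 4 × Fin m) (Fin 4 × Fin n) ℝ) (a : Fin 4) (i : Fin m) (b : Fin 4) (j : Fin n) :
    ((A ⊗ₖ (1 : Matrix (Fin m) (Fin m) ℝ)) * M * ((B ⊗ₖ (1 : Matrix (Fin n) (Fin n) ℝ)))ᵀ) (a,i) (b,j)
      = ∑ c : Fin 4, ∑ d : Fin 4, A a c * B b d * M (c,i) (d,j) := by
  simp [Matrix.mul_apply, kroneckerMap_apply, Fintype.sum_prod_type, one_apply,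
    Finset.mul_sum, Finset.sum_mul, mul_ite, ite_mul, Finset.sum_ite_eq, Finset.sum_ite_eq']
  rw [Finset.sum_comm]
  congr 1; ext c; congr 1; ext d; ring

/-- A real 4m×4n matrix is JRS-symmetric iff it is the real
counterpart of some quaternion matrix. -/
theorem jrs_symmetric_iff_real_counterpart {m n : ℕ} (hm : 0 < m) (hn : 0 < n)
    (M : Matrix (Fin 4 × Fin m) (Fin 4 × Fin n) ℝ) :
    JRSSymmetric M ↔ ∃ Q : Matrix (Fin m) (Fin n) ℍ[ℝ], M = Upsilon Q := by
  constructor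
  · rintro ⟨hJ, hR, hS⟩
    have EJ : ∀ (a b : Fin 4) (i : Fin m) (j : Fin n),
        M (a,i) (b,j) = ∑ c : Fin 4, ∑ d : Fin 4, Jb a c * Jb b d * M (c,i) (d,j) := by
      intro a b i j
      rw [← conj_apply Jb Jb M a i b j]
      exact (congrFun (congrFun hJ (a,i)) (b,j)).symm
    have ER : ∀ (a b : Fin 4) (i : Fin m) (j : Fin n),
        M (a,i) (b,j) = ∑ c : Fin 4, ∑ d : Fin 4, Rb a c * Rb b d * M (c,i) (d,j) := by
      intro a b i j
      rw [← conj_apply Rb Rb M a i b j]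
      exact (congrFun (congrFun hR (a,i)) (b,j)).symm
    have ES : ∀ (a b : Fin 4) (i : Fin m) (j : Fin n),
        M (a,i) (b,j) = ∑ c : Fin 4, ∑ d : Fin 4, Sb a c * Sb b d * M (c,i) (d,j) := by
      intro a b i j
      rw [← conj_apply Sb Sb M a i b j]
      exact (congrFun (congrFun hS (a,i)) (b,j)).symm
    refine ⟨fun i j => ⟨M (0,i) (0,j), M (0,i) (2,j), M (0,i) (1,j), M (0,i) (3,j)⟩, ?_⟩
    ext ⟨a, i⟩ ⟨b, j⟩
    fin_cases a <;> fin_cases b <;>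
      simp only [Upsilon, upsilonBlocks] <;>
      first
      | (simp [Fin.isValue]; done)
      | (rw [EJ]; simp [Jb, Fin.sum_univ_four]; done)
      | (rw [ER]; simp [Rb, Fin.sum_univ_four]; done)
      | (rw [ES]; simp [Sb, Fin.sum_univ_four]; done)
  · rintro ⟨Q, rfl⟩
    refine ⟨?_, ?_, ?_⟩ <;>
    · ext ⟨a, i⟩ ⟨b, j⟩
      simp only [JJ, RRm, SSm]
      rw [conj_apply]
      fin_cases a <;> fin_cases b <;>
        simp [Jb, Rb, Sb, Upsilon, upsilonBlocks, Fin.sum_univ_four]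
end
end

section
/- Let λ = a + b i + c j + d k be a quaternion with a, b, c, d ∈ ℝ and c² + d² ≠ 0. Set α = (b + sqrt(b² + c² + d²)) − d j + c k and β = α/|α|. Then α ≠ 0, |β| = 1, and conj(β) · λ · β = a + sqrt(b² + c² + d²) · i; in particular λ is similar (by a unit quaternion) to the complex number a + sqrt(b² + c² + d²) i lying in the closed upper half-plane. -/
open Matrix Quaternion
open scoped Kronecker Quaternion

noncomputable section

namespace Quaternion

/-- Writing `λ = a + v` with `v` pure imaginary and `|v| = s`, the quaternion
`⟨b + s, 0, -d, c⟩ = -(v + s i) i` intertwines `λ` with `a + s i` because `v² = -s²`. -/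
theorem mk_mul_mk_eq_mk_mul_mk {R : Type*} [CommRing R] (a b c d s : R)
    (hs : s ^ 2 = b ^ 2 + c ^ 2 + d ^ 2) :
    (⟨a, b, c, d⟩ : ℍ[R]) * ⟨b + s, 0, -d, c⟩ = ⟨b + s, 0, -d, c⟩ * ⟨a, s, 0, 0⟩ := by
  rw [QuaternionAlgebra.mk_mul_mk, QuaternionAlgebra.mk_mul_mk, QuaternionAlgebra.mk.injEq]
  exact ⟨by ring, by linear_combination -hs, by ring, by ring⟩

theorem mk_ne_zero_of_sq_add_sq_ne_zero {R : Type*} [CommRing R] {c d : R} (x y : R)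
    (h : c ^ 2 + d ^ 2 ≠ 0) : (⟨x, y, -d, c⟩ : ℍ[R]) ≠ 0 := by
  intro h0
  have hc : c = 0 := congrArg QuaternionAlgebra.imK h0
  have hd : d = 0 := neg_eq_zero.mp (congrArg QuaternionAlgebra.imJ h0)
  simp [hc, hd] at h

theorem star_mul_mul_eq_of_mul_eq_mul {α lam μ : ℍ[ℝ]} (hα : α ≠ 0) (h : lam * α = α * μ) :
    star (‖α‖⁻¹ • α) * lam * (‖α‖⁻¹ • α) = μ := by
  have hnorm : ‖α‖ ≠ 0 := norm_ne_zero_iff.mpr hα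
  calc star (‖α‖⁻¹ • α) * lam * (‖α‖⁻¹ • α)
      = (‖α‖⁻¹ * ‖α‖⁻¹) • (star α * (lam * α)) := by
        rw [star_smul, smul_mul_assoc, smul_mul_assoc, mul_smul_comm, smul_smul, mul_assoc]
    _ = (‖α‖⁻¹ * ‖α‖⁻¹ * normSq α) • μ := by
        rw [h, ← mul_assoc, star_mul_self, coe_mul_eq_smul, smul_smul]
    _ = μ := by
        rw [normSq_eq_norm_mul_self, ← mul_inv, inv_mul_cancel₀ (mul_ne_zero hnorm hnorm), one_smul]

end Quaternion

/-- A quaternion `λ = a + bi + cj + dk` with `c² + d² ≠ 0` is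
similar, via the unit quaternion `β = α/|α|` with
`α = (b + √(b²+c²+d²)) − d j + c k`, to the standard complex eigenvalue
`a + √(b²+c²+d²) i`. -/
theorem quaternion_similar_standard (a b c d : ℝ) (h : c ^ 2 + d ^ 2 ≠ 0) :
    let α : ℍ[ℝ] := ⟨b + Real.sqrt (b ^ 2 + c ^ 2 + d ^ 2), 0, -d, c⟩
    let β : ℍ[ℝ] := ‖α‖⁻¹ • α
    let lam : ℍ[ℝ] := ⟨a, b, c, d⟩
    α ≠ 0 ∧ ‖β‖ = 1 ∧
      star β * lam * β = (⟨a, Real.sqrt (b ^ 2 + c ^ 2 + d ^ 2), 0, 0⟩ : ℍ[ℝ]) := by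
  intro α β lam
  have hα : α ≠ 0 := mk_ne_zero_of_sq_add_sq_ne_zero _ _ h
  have hs : Real.sqrt (b ^ 2 + c ^ 2 + d ^ 2) ^ 2 = b ^ 2 + c ^ 2 + d ^ 2 :=
    Real.sq_sqrt (by positivity)
  exact ⟨hα, norm_smul_inv_norm hα,
    star_mul_mul_eq_of_mul_eq_mul hα (mk_mul_mk_eq_mk_mul_mk a b c d _ hs)⟩
end
end

section
/- Every orthogonally JRS-symplectic matrix W ∈ ℝ^{4n×4n} is JRS-symmetric and hence has the block structure W = [[W₀, W₂, W₁, W₃], [−W₂, W₀, W₃, −W₁], [−W₁, −W₃, W₀, W₂], [−W₃, W₁, −W₂, W₀]] for some W₀, W₁, W₂, W₃ ∈ ℝ^{n×n}. -/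
open Matrix Quaternion
open scoped Kronecker Quaternion

noncomputable section

/-!
Orthogonality turns `W E Wᵀ = E` into `E W = W E`, hence `E W Eᵀ = W` for each of the orthogonal
matrices `E = J_n, R_n, S_n`. Fixing the positions `i, j` inside the `n × n` blocks, invariance
under `J_n` and `R_n` says that the `4 × 4` matrix of entries `W (a, i) (b, j)` is invariant under
conjugation by the signed permutations `J` and `R`; these carry row `0` to every other row, which
forces the quaternion sign pattern of `upsilonBlocks`.
-/

namespace Matrix

theorem conj_eq_self_of_conj_eq_of_orthogonal {R ι : Type*} [Semiring R] [Fintype ι]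
    [DecidableEq ι] {W E : Matrix ι ι R} (hW : Wᵀ * W = 1) (hE : E * Eᵀ = 1)
    (hWE : W * E * Wᵀ = E) :
    E * W * Eᵀ = W := by
  have hcomm : E * W = W * E :=
    calc E * W = W * E * Wᵀ * W := by rw [hWE]
      _ = W * E * (Wᵀ * W) := Matrix.mul_assoc _ _ _
      _ = W * E := by rw [hW, Matrix.mul_one]
  rw [hcomm, Matrix.mul_assoc, hE, Matrix.mul_one]

variable {R l m n o : Type*} [CommSemiring R]

theorem kronecker_one_mul_transpose_self [Fintype l] [DecidableEq l] [Fintype m] [DecidableEq m]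
    {A : Matrix l l R} (hA : A * Aᵀ = 1) :
    (A ⊗ₖ (1 : Matrix m m R)) * (A ⊗ₖ (1 : Matrix m m R))ᵀ = 1 := by
  rw [← kroneckerMap_transpose, ← mul_kronecker_mul, hA, transpose_one, Matrix.mul_one,
    one_kronecker_one]

def innerSlice (M : Matrix (l × m) (n × o) R) (i : m) (j : o) : Matrix l n R :=
  of fun c d => M (c, i) (d, j)

theorem kronecker_one_conj_apply [Fintype l] [Fintype m] [DecidableEq m] [Fintype n] [Fintype o]
    [DecidableEq o] (A : Matrix l l R) (B : Matrix n n R) (M : Matrix (l × m) (n × o) R)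
    (a : l) (i : m) (b : n) (j : o) :
    ((A ⊗ₖ (1 : Matrix m m R)) * M * (B ⊗ₖ (1 : Matrix o o R))ᵀ) (a, i) (b, j) =
      (A * M.innerSlice i j * Bᵀ) a b := by
  simp [innerSlice, mul_apply, Fintype.sum_prod_type, one_apply, Finset.sum_mul]

end Matrix

theorem Jb_mul_transpose_self : Jb * Jbᵀ = 1 := by
  ext i j; fin_cases i <;> fin_cases j <;> simp [Jb, mul_apply, Fin.sum_univ_four]

theorem Rb_mul_transpose_self : Rb * Rbᵀ = 1 := by
  ext i j; fin_cases i <;> fin_cases j <;> simp [Rb, mul_apply, Fin.sum_univ_four]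

theorem Sb_mul_transpose_self : Sb * Sbᵀ = 1 := by
  ext i j; fin_cases i <;> fin_cases j <;> simp [Sb, mul_apply, Fin.sum_univ_four]

theorem Jb_mul_mul_transpose (B : Matrix (Fin 4) (Fin 4) ℝ) :
    Jb * B * Jbᵀ = !![B 2 2, B 2 3, -B 2 0, -B 2 1;
                      B 3 2, B 3 3, -B 3 0, -B 3 1;
                      -B 0 2, -B 0 3, B 0 0, B 0 1;
                      -B 1 2, -B 1 3, B 1 0, B 1 1] := by
  ext i j
  fin_cases i <;> fin_cases j <;>
    · simp only [mul_apply, transpose_apply, Fin.sum_univ_four]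
      norm_num [Jb, cons_val_two, cons_val_three]

theorem Rb_mul_mul_transpose (B : Matrix (Fin 4) (Fin 4) ℝ) :
    Rb * B * Rbᵀ = !![B 1 1, -B 1 0, -B 1 3, B 1 2;
                      -B 0 1, B 0 0, B 0 3, -B 0 2;
                      -B 3 1, B 3 0, B 3 3, -B 3 2;
                      B 2 1, -B 2 0, -B 2 3, B 2 2] := by
  ext i j
  fin_cases i <;> fin_cases j <;>
    · simp only [mul_apply, transpose_apply, Fin.sum_univ_four]
      norm_num [Rb, cons_val_two, cons_val_three]

theorem eq_quaternion_pattern_of_Jb_Rb_invariant {B : Matrix (Fin 4) (Fin 4) ℝ}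
    (hJ : Jb * B * Jbᵀ = B) (hR : Rb * B * Rbᵀ = B) :
    B = !![B 0 0, B 0 1, B 0 2, B 0 3;
           -B 0 1, B 0 0, B 0 3, -B 0 2;
           -B 0 2, -B 0 3, B 0 0, B 0 1;
           -B 0 3, B 0 2, -B 0 1, B 0 0] := by
  rw [Jb_mul_mul_transpose, ← Matrix.ext_iff] at hJ
  rw [Rb_mul_mul_transpose, ← Matrix.ext_iff] at hR
  simp only [Fin.isValue, of_apply, cons_val', cons_val_fin_one, Fin.forall_fin_succ,
    cons_val_zero, cons_val_succ, Fin.succ_zero_eq_one, Fin.succ_one_eq_two, Fin.reduceSucc,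
    IsEmpty.forall_iff, and_true] at hJ hR
  ext a b
  fin_cases a <;> fin_cases b <;>
    simp only [Fin.zero_eta, Fin.isValue, Fin.mk_one, Fin.reduceFinMk, of_apply, cons_val',
      cons_val, cons_val_one, cons_val_zero, cons_val_fin_one] <;>
    linarith

theorem eq_upsilonBlocks_of_JJ_RRm_invariant {m n : ℕ}
    {M : Matrix (Fin 4 × Fin m) (Fin 4 × Fin n) ℝ}
    (hJ : JJ m * M * (JJ n)ᵀ = M) (hR : RRm m * M * (RRm n)ᵀ = M) :
    M = upsilonBlocks (fun i j => M (0, i) (0, j)) (fun i j => M (0, i) (2, j))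
      (fun i j => M (0, i) (1, j)) (fun i j => M (0, i) (3, j)) := by
  ext ⟨a, i⟩ ⟨b, j⟩
  have slice_invariant {E : Matrix (Fin 4) (Fin 4) ℝ}
      (hE : E ⊗ₖ (1 : Matrix (Fin m) (Fin m) ℝ) * M *
        (E ⊗ₖ (1 : Matrix (Fin n) (Fin n) ℝ))ᵀ = M) :
      E * M.innerSlice i j * Eᵀ = M.innerSlice i j := by
    ext c d
    rw [← kronecker_one_conj_apply, hE]
    rfl
  exact congr_fun₂
    (eq_quaternion_pattern_of_Jb_Rb_invariant (slice_invariant hJ) (slice_invariant hR)) a b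

/-- Every orthogonally JRS-symplectic matrix is JRS-symmetric
and hence has the block structure
`[[W₀,W₂,W₁,W₃],[−W₂,W₀,W₃,−W₁],[−W₁,−W₃,W₀,W₂],[−W₃,W₁,−W₂,W₀]]`. -/
theorem ortho_jrs_symplectic_block_structure {n : ℕ}
    (W : Matrix (Fin 4 × Fin n) (Fin 4 × Fin n) ℝ) (hW : OrthoJRSSymplectic W) :
    JRSSymmetric W ∧
      ∃ W0 W1 W2 W3 : Matrix (Fin n) (Fin n) ℝ, W = upsilonBlocks W0 W1 W2 W3 := by
  obtain ⟨hO, hJ, hR, hS⟩ := hW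
  have hsymm : JRSSymmetric W :=
    ⟨conj_eq_self_of_conj_eq_of_orthogonal hO
        (kronecker_one_mul_transpose_self Jb_mul_transpose_self) hJ,
      conj_eq_self_of_conj_eq_of_orthogonal hO
        (kronecker_one_mul_transpose_self Rb_mul_transpose_self) hR,
      conj_eq_self_of_conj_eq_of_orthogonal hO
        (kronecker_one_mul_transpose_self Sb_mul_transpose_self) hS⟩
  exact ⟨hsymm, _, _, _, _, eq_upsilonBlocks_of_JJ_RRm_invariant hsymm.1 hsymm.2.1⟩
end
end

section
/- Let M ∈ ℝ^{4n×4n} be a JRS-symmetric matrix. Then there exists an orthogonally JRS-symplectic matrix W ∈ ℝ^{4n×4n} such that W M Wᵀ = H is an upper JRS-Hessenberg matrix. -/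
open Matrix Quaternion
open scoped Kronecker Quaternion

noncomputable section

/-!
A JRS-symmetric matrix `M` is the real counterpart `Υ_Q` of a quaternion matrix `Q`: averaging
`M` with its conjugates by `J`, `R`, `S` fixes it and lands in the image of `Υ`. The map
`Q ↦ Υ_Q` is multiplicative, sends `Qᴴ` to the transpose, and its image commutes with `J`, `R`,
`S` because their `4 × 4` blocks commute with the real representation of every quaternion.
So `Υ_U` is orthogonally JRS-symplectic for every unitary quaternion matrix `U`, and it suffices
to bring `Q` to upper Hessenberg form with real subdiagonal by a unitary similarity. That is the
Householder reduction over `ℍ`, column by column: a diagonal unit phase makes the pivot entry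
real, after which a Householder reflection sends the rest of the column to a real multiple
of `e₀`.
-/

def realRep : ℍ[ℝ] →+* Matrix (Fin 4) (Fin 4) ℝ where
  toFun q := !![q.re, q.imJ, q.imI, q.imK;
     -q.imJ, q.re, q.imK, -q.imI;
     -q.imI, -q.imK, q.re, q.imJ;
     -q.imK, q.imI, -q.imJ, q.re]
  map_one' := by ext i j; fin_cases i <;> fin_cases j <;> simp
  map_mul' p q := by
    ext i j; fin_cases i <;> fin_cases j <;> simp [Matrix.mul_apply, Fin.sum_univ_four] <;> ring
  map_zero' := by ext i j; fin_cases i <;> fin_cases j <;> simp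
  map_add' p q := by ext i j; fin_cases i <;> fin_cases j <;> simp <;> ring

lemma realRep_star (q : ℍ[ℝ]) : realRep (star q) = (realRep q)ᵀ := by
  ext i j; fin_cases i <;> fin_cases j <;> simp [realRep]

lemma commute_Jb_realRep (q : ℍ[ℝ]) : Commute Jb (realRep q) := by
  ext i j; fin_cases i <;> fin_cases j <;> simp [Jb, realRep, Matrix.mul_apply, Fin.sum_univ_four]

lemma commute_Rb_realRep (q : ℍ[ℝ]) : Commute Rb (realRep q) := by
  ext i j; fin_cases i <;> fin_cases j <;> simp [Rb, realRep, Matrix.mul_apply, Fin.sum_univ_four]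

lemma commute_Sb_realRep (q : ℍ[ℝ]) : Commute Sb (realRep q) := by
  ext i j; fin_cases i <;> fin_cases j <;> simp [Sb, realRep, Matrix.mul_apply, Fin.sum_univ_four]

lemma Upsilon_apply {m n : ℕ} (Q : Matrix (Fin m) (Fin n) ℍ[ℝ]) (p : Fin 4 × Fin m)
    (q : Fin 4 × Fin n) : Upsilon Q p q = realRep (Q p.2 q.2) p.1 q.1 := rfl

lemma Upsilon_mul {l m n : ℕ} (A : Matrix (Fin l) (Fin m) ℍ[ℝ])
    (B : Matrix (Fin m) (Fin n) ℍ[ℝ]) : Upsilon (A * B) = Upsilon A * Upsilon B := by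
  ext ⟨a, i⟩ ⟨b, j⟩
  simp only [Upsilon_apply, Matrix.mul_apply, map_sum, map_mul, Matrix.sum_apply,
    Fintype.sum_prod_type]
  exact Finset.sum_comm

lemma Upsilon_one {n : ℕ} : Upsilon (1 : Matrix (Fin n) (Fin n) ℍ[ℝ]) = 1 := by
  ext ⟨a, i⟩ ⟨b, j⟩
  rw [Upsilon_apply]
  rcases eq_or_ne i j with rfl | hij
  · simp [Matrix.one_apply]
  · simp [Matrix.one_apply_ne hij, hij]

lemma Upsilon_conjTranspose {m n : ℕ} (A : Matrix (Fin m) (Fin n) ℍ[ℝ]) :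
    Upsilon Aᴴ = (Upsilon A)ᵀ := by
  ext ⟨a, i⟩ ⟨b, j⟩
  simp [Upsilon_apply, realRep_star]

lemma kronecker_one_mul_apply {m n : ℕ} (X : Matrix (Fin 4) (Fin 4) ℝ)
    (N : Matrix (Fin 4 × Fin m) (Fin 4 × Fin n) ℝ) (a : Fin 4) (i : Fin m)
    (q : Fin 4 × Fin n) :
    ((X ⊗ₖ (1 : Matrix (Fin m) (Fin m) ℝ)) * N) (a, i) q = ∑ c, X a c * N (c, i) q := by
  simp [Matrix.mul_apply, Fintype.sum_prod_type, Matrix.one_apply]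

lemma mul_kronecker_one_apply {m n : ℕ} (X : Matrix (Fin 4) (Fin 4) ℝ)
    (N : Matrix (Fin 4 × Fin m) (Fin 4 × Fin n) ℝ) (p : Fin 4 × Fin m)
    (b : Fin 4) (j : Fin n) :
    (N * (X ⊗ₖ (1 : Matrix (Fin n) (Fin n) ℝ))) p (b, j) = ∑ d, N p (d, j) * X d b := by
  simp [Matrix.mul_apply, Fintype.sum_prod_type, Matrix.one_apply]

lemma kronecker_one_conj_apply {m n : ℕ} (X : Matrix (Fin 4) (Fin 4) ℝ)
    (N : Matrix (Fin 4 × Fin m) (Fin 4 × Fin n) ℝ) (a b : Fin 4) (i : Fin m) (j : Fin n) :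
    ((X ⊗ₖ (1 : Matrix (Fin m) (Fin m) ℝ)) * N * (X ⊗ₖ (1 : Matrix (Fin n) (Fin n) ℝ))ᵀ)
      (a, i) (b, j) = ∑ c, ∑ d, X a c * X b d * N (c, i) (d, j) := by
  rw [← Matrix.kroneckerMap_transpose, Matrix.transpose_one, mul_kronecker_one_apply]
  simp only [kronecker_one_mul_apply, Finset.sum_mul, Matrix.transpose_apply]
  rw [Finset.sum_comm]
  exact Finset.sum_congr rfl fun c _ => Finset.sum_congr rfl fun d _ => by ring

lemma kronecker_one_mul_Upsilon {m n : ℕ} {X : Matrix (Fin 4) (Fin 4) ℝ}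
    (hX : ∀ q, Commute X (realRep q)) (A : Matrix (Fin m) (Fin n) ℍ[ℝ]) :
    (X ⊗ₖ (1 : Matrix (Fin m) (Fin m) ℝ)) * Upsilon A
      = Upsilon A * (X ⊗ₖ (1 : Matrix (Fin n) (Fin n) ℝ)) := by
  ext ⟨a, i⟩ ⟨b, j⟩
  rw [kronecker_one_mul_apply, mul_kronecker_one_apply]
  simpa only [Upsilon_apply, Matrix.mul_apply] using congrFun (congrFun (hX (A i j)).eq a) b

lemma orthoJRSSymplectic_Upsilon {n : ℕ} {U : Matrix (Fin n) (Fin n) ℍ[ℝ]}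
    (hU : U ∈ unitary (Matrix (Fin n) (Fin n) ℍ[ℝ])) : OrthoJRSSymplectic (Upsilon U) := by
  have hstar : Upsilon (star U) = (Upsilon U)ᵀ := Upsilon_conjTranspose U
  have hWWt : Upsilon U * (Upsilon U)ᵀ = 1 := by
    rw [← hstar, ← Upsilon_mul, Unitary.mul_star_self_of_mem hU, Upsilon_one]
  have conj (X : Matrix (Fin 4) (Fin 4) ℝ) (hX : ∀ q, Commute X (realRep q)) :
      Upsilon U * (X ⊗ₖ 1) * (Upsilon U)ᵀ = X ⊗ₖ 1 := by
    rw [← kronecker_one_mul_Upsilon hX, Matrix.mul_assoc, hWWt, Matrix.mul_one]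
  exact ⟨by rw [← hstar, ← Upsilon_mul, Unitary.star_mul_self_of_mem hU, Upsilon_one],
    conj _ commute_Jb_realRep, conj _ commute_Rb_realRep, conj _ commute_Sb_realRep⟩

-- Each coordinate is the mean, with signs, of the four blocks of `M` in which
-- `upsilonBlocks` places it.
def toQuatMatrix {m n : ℕ} (M : Matrix (Fin 4 × Fin m) (Fin 4 × Fin n) ℝ) :
    Matrix (Fin m) (Fin n) ℍ[ℝ] := fun i j =>
  ⟨(M (0,i) (0,j) + M (1,i) (1,j) + M (2,i) (2,j) + M (3,i) (3,j)) / 4,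
   (M (0,i) (2,j) - M (2,i) (0,j) + M (3,i) (1,j) - M (1,i) (3,j)) / 4,
   (M (0,i) (1,j) - M (1,i) (0,j) + M (2,i) (3,j) - M (3,i) (2,j)) / 4,
   (M (0,i) (3,j) - M (3,i) (0,j) + M (1,i) (2,j) - M (2,i) (1,j)) / 4⟩

lemma Upsilon_toQuatMatrix {m n : ℕ} (M : Matrix (Fin 4 × Fin m) (Fin 4 × Fin n) ℝ) :
    Upsilon (toQuatMatrix M) = (4 : ℝ)⁻¹ •
      (M + JJ m * M * (JJ n)ᵀ + RRm m * M * (RRm n)ᵀ + SSm m * M * (SSm n)ᵀ) := by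
  ext ⟨a, i⟩ ⟨b, j⟩
  simp only [JJ, RRm, SSm, Matrix.smul_apply, Matrix.add_apply, kronecker_one_conj_apply,
    Fin.sum_univ_four, smul_eq_mul, Upsilon_apply]
  fin_cases a <;> fin_cases b <;> simp [realRep, toQuatMatrix, Jb, Rb, Sb] <;> ring

lemma JRSSymmetric.Upsilon_toQuatMatrix {m n : ℕ}
    {M : Matrix (Fin 4 × Fin m) (Fin 4 × Fin n) ℝ} (hM : JRSSymmetric M) :
    Upsilon (toQuatMatrix M) = M := by
  obtain ⟨hJ, hR, hS⟩ := hM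
  rw [_root_.Upsilon_toQuatMatrix, hJ, hR, hS]
  module

lemma Quaternion.mem_unitary_iff_normSq {q : ℍ[ℝ]} : q ∈ unitary ℍ[ℝ] ↔ normSq q = 1 := by
  rw [Unitary.mem_iff, star_mul_self, self_mul_star, and_self, ← coe_one, coe_inj]

lemma exists_unitary_mul_eq_norm (q : ℍ[ℝ]) : ∃ p ∈ unitary ℍ[ℝ], p * q = (‖q‖ : ℍ[ℝ]) := by
  rcases eq_or_ne q 0 with rfl | hq
  · exact ⟨1, one_mem _, by simp⟩
  have hnorm : ‖q‖ ≠ 0 := norm_ne_zero_iff.mpr hq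
  refine ⟨(‖q‖⁻¹ : ℝ) • star q, ?_, ?_⟩
  · rw [Quaternion.mem_unitary_iff_normSq, normSq_smul, normSq_star, normSq_eq_norm_mul_self]
    field_simp
  · rw [smul_mul_assoc, star_mul_self, normSq_eq_norm_mul_self, ← coe_mul_eq_smul, ← coe_mul]
    congr 1
    field_simp

lemma diagonal_mem_unitary {n α : Type*} [Fintype n] [DecidableEq n] [Semiring α] [StarRing α]
    {d : n → α} (hd : ∀ i, d i ∈ unitary α) : diagonal d ∈ unitary (Matrix n n α) := by
  simp only [Unitary.mem_iff, star_eq_conjTranspose, diagonal_conjTranspose,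
    diagonal_mul_diagonal, ← diagonal_one]
  exact ⟨congrArg diagonal (funext fun i => Unitary.star_mul_self_of_mem (hd i)),
    congrArg diagonal (funext fun i => Unitary.mul_star_self_of_mem (hd i))⟩

section Householder

variable {n : Type*} [Fintype n]

lemma star_dotProduct_self (u : n → ℍ[ℝ]) :
    star u ⬝ᵥ u = ((∑ k, normSq (u k) : ℝ) : ℍ[ℝ]) := by
  simp only [dotProduct, Pi.star_apply, star_mul_self, ← algebraMap_def, map_sum]

variable [DecidableEq n]

-- For `u = 0` the junk value `2 / 0 = 0` makes this the identity.
def householder (u : n → ℍ[ℝ]) : Matrix n n ℍ[ℝ] :=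
  1 - (2 / ∑ k, normSq (u k)) • vecMulVec u (star u)

lemma householder_mem_unitary (u : n → ℍ[ℝ]) : householder u ∈ unitary (Matrix n n ℍ[ℝ]) := by
  set s := ∑ k, normSq (u k)
  set P := vecMulVec u (star u)
  have hV : householder u = 1 - (2 / s) • P := rfl
  have hPP : P * P = s • P := by
    ext i j : 1
    rw [vecMulVec_mul_vecMulVec, star_dotProduct_self]
    simp only [vecMulVec_apply, Pi.smul_apply, smul_eq_mul, Matrix.smul_apply, P]
    rw [← mul_assoc, ← coe_commutes, mul_assoc, coe_mul_eq_smul]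
  have hcoef : (2 / s) * (2 / s) * s = 2 / s + 2 / s := by
    rcases eq_or_ne s 0 with hs | hs
    · simp [hs]
    · field_simp; ring
  have hinv : householder u * householder u = 1 := by
    simp only [hV, sub_mul, mul_sub, one_mul, mul_one, smul_mul_smul_comm, hPP, smul_smul,
      hcoef, add_smul]
    abel
  have hself : star (householder u) = householder u := by
    ext i j : 1
    rw [star_eq_conjTranspose, conjTranspose_apply]
    simp only [householder, Matrix.sub_apply, Matrix.smul_apply, vecMulVec_apply, star_sub,
      Quaternion.star_smul, star_mul, star_star, Pi.star_apply, one_apply, eq_comm (a := j)]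
    split_ifs <;> simp
  rw [Unitary.mem_iff, hself, and_self, hinv]

lemma householder_mulVec {u y : n → ℍ[ℝ]} (h : 2 * (star u ⬝ᵥ y) = star u ⬝ᵥ u) :
    householder u *ᵥ y = y - u := by
  rcases eq_or_ne u 0 with rfl | hu
  · simp [householder]
  have hs : ∑ k, normSq (u k) ≠ 0 := fun h0 => hu <| funext fun k => normSq_eq_zero.1 <|
    (Finset.sum_eq_zero_iff_of_nonneg fun _ _ => normSq_nonneg).1 h0 k (Finset.mem_univ _)
  have hd : (2 / ∑ k, normSq (u k)) • (star u ⬝ᵥ y) = 1 := by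
    rw [div_eq_inv_mul, mul_smul, two_smul, ← two_mul, h, star_dotProduct_self, smul_coe,
      inv_mul_cancel₀ hs, coe_one]
  rw [householder, sub_mulVec, one_mulVec, smul_mulVec, vecMulVec_mulVec]
  ext k : 1
  simp only [Pi.sub_apply, Pi.smul_apply, MulOpposite.smul_eq_mul_unop, MulOpposite.unop_op]
  rw [← mul_smul_comm, hd, mul_one]

end Householder

lemma exists_unitary_mulVec_eq_single_of_real {m : ℕ} (y : Fin (m + 1) → ℍ[ℝ]) {r : ℝ}
    (hy : y 0 = r) : ∃ V ∈ unitary (Matrix (Fin (m + 1)) (Fin (m + 1)) ℍ[ℝ]), ∃ c : ℝ,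
      V *ᵥ y = Pi.single 0 (c : ℍ[ℝ]) := by
  -- With `y 0 = r` real, `u = y - c e₀` has `star u ⬝ᵥ y = c² - c r` and
  -- `star u ⬝ᵥ u = 2 (c² - c r)`, so the reflection in `u` sends `y` to `c e₀`.
  set c := √(∑ k, normSq (y k))
  have hc : star y ⬝ᵥ y = ((c * c : ℝ) : ℍ[ℝ]) := by
    rw [star_dotProduct_self, Real.mul_self_sqrt (Finset.sum_nonneg fun _ _ => normSq_nonneg)]
  refine ⟨householder (y - Pi.single 0 (c : ℍ[ℝ])), householder_mem_unitary _, c, ?_⟩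
  rw [householder_mulVec, sub_sub_cancel]
  simp only [star_sub, sub_dotProduct, dotProduct_sub, ← Pi.single_star, single_dotProduct,
    dotProduct_single, hc, Pi.sub_apply, Pi.star_apply, Pi.single_eq_same, hy, star_coe]
  rw [show (2 : ℍ[ℝ]) = ((2 : ℝ) : ℍ[ℝ]) from rfl]
  norm_cast
  congr 1
  ring

lemma exists_unitary_mulVec_eq_single {m : ℕ} (x : Fin (m + 1) → ℍ[ℝ]) :
    ∃ V ∈ unitary (Matrix (Fin (m + 1)) (Fin (m + 1)) ℍ[ℝ]), ∃ c : ℝ,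
      V *ᵥ x = Pi.single 0 (c : ℍ[ℝ]) := by
  obtain ⟨p, hp, hpx⟩ := exists_unitary_mul_eq_norm (x 0)
  set d : Fin (m + 1) → ℍ[ℝ] := Function.update 1 0 p
  have hd : ∀ k, d k ∈ unitary ℍ[ℝ] := by
    intro k
    rcases eq_or_ne k 0 with rfl | hk
    · simp [d, hp]
    · simp [d, hk]
  obtain ⟨V, hV, c, hVx⟩ :=
    exists_unitary_mulVec_eq_single_of_real (diagonal d *ᵥ x) (r := ‖x 0‖)
      (by simpa [mulVec_diagonal, d] using hpx)
  exact ⟨V * diagonal d, mul_mem hV (diagonal_mem_unitary hd), c, by rw [← mulVec_mulVec, hVx]⟩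

section BlockDiagOne

variable {α : Type*} {n : ℕ}

def blockDiagOne [Zero α] [One α] (V : Matrix (Fin n) (Fin n) α) :
    Matrix (Fin (n + 1)) (Fin (n + 1)) α :=
  of fun i j => Fin.cases (Fin.cases 1 0 j) (fun i' => Fin.cases 0 (V i') j) i

section

variable [Zero α] [One α] (V : Matrix (Fin n) (Fin n) α) (i j : Fin n)

@[simp] lemma blockDiagOne_zero_zero : blockDiagOne V 0 0 = 1 := rfl
@[simp] lemma blockDiagOne_zero_succ : blockDiagOne V 0 j.succ = 0 := rfl
@[simp] lemma blockDiagOne_succ_zero : blockDiagOne V i.succ 0 = 0 := rfl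
@[simp] lemma blockDiagOne_succ_succ : blockDiagOne V i.succ j.succ = V i j := rfl

end

variable [Semiring α]

lemma blockDiagOne_mul (V W : Matrix (Fin n) (Fin n) α) :
    blockDiagOne V * blockDiagOne W = blockDiagOne (V * W) := by
  ext i j
  cases i using Fin.cases <;> cases j using Fin.cases <;> simp [mul_apply, Fin.sum_univ_succ]

lemma blockDiagOne_one : blockDiagOne (1 : Matrix (Fin n) (Fin n) α) = 1 := by
  ext i j
  cases i using Fin.cases <;> cases j using Fin.cases <;>
    simp [one_apply, Fin.succ_ne_zero, (Fin.succ_ne_zero _).symm]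

lemma blockDiagOne_mulVec_single_zero (V : Matrix (Fin n) (Fin n) α) (a : α) :
    blockDiagOne V *ᵥ Pi.single 0 a = Pi.single 0 a := by
  ext i
  cases i using Fin.cases <;> simp [mulVec, dotProduct, Fin.sum_univ_succ]

variable [StarRing α]

lemma star_blockDiagOne (V : Matrix (Fin n) (Fin n) α) :
    star (blockDiagOne V) = blockDiagOne (star V) := by
  ext i j
  cases i using Fin.cases <;> cases j using Fin.cases <;> simp [star_eq_conjTranspose]

lemma blockDiagOne_mem_unitary {V : Matrix (Fin n) (Fin n) α}
    (hV : V ∈ unitary (Matrix (Fin n) (Fin n) α)) :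
    blockDiagOne V ∈ unitary (Matrix (Fin (n + 1)) (Fin (n + 1)) α) := by
  simp only [Unitary.mem_iff, star_blockDiagOne, blockDiagOne_mul,
    Unitary.star_mul_self_of_mem hV, Unitary.mul_star_self_of_mem hV, blockDiagOne_one, and_self]

lemma blockDiagOne_conj_apply_succ_zero (V : Matrix (Fin n) (Fin n) α)
    (B : Matrix (Fin (n + 1)) (Fin (n + 1)) α) (i : Fin n) :
    (blockDiagOne V * B * star (blockDiagOne V)) i.succ 0 = (V *ᵥ fun k => B k.succ 0) i := by
  simp [star_blockDiagOne, mul_apply, Fin.sum_univ_succ, mulVec, dotProduct]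

lemma blockDiagOne_conj_submatrix_succ (V : Matrix (Fin n) (Fin n) α)
    (B : Matrix (Fin (n + 1)) (Fin (n + 1)) α) :
    (blockDiagOne V * B * star (blockDiagOne V)).submatrix Fin.succ Fin.succ
      = V * B.submatrix Fin.succ Fin.succ * star V := by
  ext i j
  simp [star_blockDiagOne, mul_apply, Fin.sum_univ_succ]

end BlockDiagOne

def IsRealHessenberg {n : ℕ} (B : Matrix (Fin n) (Fin n) ℍ[ℝ]) : Prop :=
  (∀ i j : Fin n, (j : ℕ) + 1 < i → B i j = 0) ∧ ∀ i j : Fin n, (j : ℕ) < i → (B i j).im = 0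

lemma isRealHessenberg_of_col_zero {n : ℕ} {B : Matrix (Fin (n + 2)) (Fin (n + 2)) ℍ[ℝ]}
    {c : ℝ} (hcol : (fun i => B (Fin.succ i) 0) = Pi.single 0 (c : ℍ[ℝ]))
    (hsub : IsRealHessenberg (B.submatrix Fin.succ Fin.succ)) : IsRealHessenberg B := by
  constructor <;> intro i j hij <;> cases i using Fin.cases <;> cases j using Fin.cases
  all_goals simp only [Fin.val_zero, Fin.val_succ, not_lt_zero] at hij
  case succ.zero i =>
    rw [congrFun hcol i, Pi.single_eq_of_ne (by rintro rfl; simp at hij)]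
  case succ.succ i j => exact hsub.1 i j (by omega)
  case succ.zero i =>
    rw [congrFun hcol i]
    rcases eq_or_ne i 0 with rfl | hi
    · simp
    · simp [hi]
  case succ.succ i j => exact hsub.2 i j (by omega)

theorem exists_blockDiagOne_isRealHessenberg (n : ℕ)
    (A : Matrix (Fin (n + 1)) (Fin (n + 1)) ℍ[ℝ]) :
    ∃ V ∈ unitary (Matrix (Fin n) (Fin n) ℍ[ℝ]),
      IsRealHessenberg (blockDiagOne V * A * star (blockDiagOne V)) := by
  induction n with
  | zero => exact ⟨1, one_mem _, fun i j => by omega, fun i j => by omega⟩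
  | succ n ih =>
    obtain ⟨V₁, hV₁, c, hc⟩ := exists_unitary_mulVec_eq_single fun k => A k.succ 0
    set B := blockDiagOne V₁ * A * star (blockDiagOne V₁)
    obtain ⟨V₂, hV₂, hH⟩ := ih (B.submatrix Fin.succ Fin.succ)
    refine ⟨blockDiagOne V₂ * V₁, mul_mem (blockDiagOne_mem_unitary hV₂) hV₁, ?_⟩
    have hconj :
        blockDiagOne (blockDiagOne V₂ * V₁) * A * star (blockDiagOne (blockDiagOne V₂ * V₁))
          = blockDiagOne (blockDiagOne V₂) * B * star (blockDiagOne (blockDiagOne V₂)) := by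
      simp only [B, ← blockDiagOne_mul, star_mul, Matrix.mul_assoc]
    rw [hconj]
    have hB : (fun k : Fin (n + 1) => B k.succ 0) = Pi.single 0 (c : ℍ[ℝ]) := by
      ext k : 1
      exact (blockDiagOne_conj_apply_succ_zero V₁ A k).trans (congrFun hc k)
    refine isRealHessenberg_of_col_zero (c := c) ?_ ?_
    · ext i : 1
      rw [blockDiagOne_conj_apply_succ_zero, hB, blockDiagOne_mulVec_single_zero]
    · rwa [blockDiagOne_conj_submatrix_succ]

theorem exists_unitary_isRealHessenberg {n : ℕ} (A : Matrix (Fin n) (Fin n) ℍ[ℝ]) :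
    ∃ U ∈ unitary (Matrix (Fin n) (Fin n) ℍ[ℝ]), IsRealHessenberg (U * A * star U) := by
  cases n with
  | zero => exact ⟨1, one_mem _, fun i => i.elim0, fun i => i.elim0⟩
  | succ n =>
    obtain ⟨V, hV, hH⟩ := exists_blockDiagOne_isRealHessenberg n A
    exact ⟨blockDiagOne V, blockDiagOne_mem_unitary hV, hH⟩

/-- Every JRS-symmetric matrix can be reduced to upper
JRS-Hessenberg form by an orthogonally JRS-symplectic similarity. -/
theorem jrs_hessenberg_reduction {n : ℕ}
    (M : Matrix (Fin 4 × Fin n) (Fin 4 × Fin n) ℝ) (hM : JRSSymmetric M) :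
    ∃ (W : Matrix (Fin 4 × Fin n) (Fin 4 × Fin n) ℝ)
      (H0 H1 H2 H3 : Matrix (Fin n) (Fin n) ℝ),
      OrthoJRSSymplectic W ∧
      W * M * Wᵀ = upsilonBlocks H0 H1 H2 H3 ∧
      UpperHessenbergM H0 ∧
      UpperTriangularM H1 ∧ UpperTriangularM H2 ∧ UpperTriangularM H3 := by
  obtain ⟨U, hU, hsub, him⟩ := exists_unitary_isRealHessenberg (toQuatMatrix M)
  set B := U * toQuatMatrix M * star U
  refine ⟨Upsilon U, fun i j => (B i j).re, fun i j => (B i j).imI, fun i j => (B i j).imJ,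
    fun i j => (B i j).imK, orthoJRSSymplectic_Upsilon hU, ?_,
    fun i j h => by simp [hsub i j h],
    fun i j h => by simpa using congrArg QuaternionAlgebra.imI (him i j h),
    fun i j h => by simpa using congrArg QuaternionAlgebra.imJ (him i j h),
    fun i j h => by simpa using congrArg QuaternionAlgebra.imK (him i j h)⟩
  rw [← hM.Upsilon_toQuatMatrix, ← Upsilon_conjTranspose, ← Upsilon_mul, ← Upsilon_mul]
  rfl
end
end

section
/- (Preservation of the upper JRS-Hessenberg form under the Francis double-shift step.) Let H ∈ ℝ^{4n×4n} be an unreduced upper JRS-Hessenberg matrix and let κ ∈ ℂ be such that the matrix C = H² − 2 Re(κ) H + |κ|² I ∈ ℝ^{4n×4n} is invertible. Suppose C = W R where W ∈ ℝ^{4n×4n} is orthogonally JRS-symplectic and R ∈ ℝ^{4n×4n} is upper JRS-triangular. Then Ĥ = Wᵀ H W is again upper JRS-Hessenberg. -/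
open Matrix Quaternion
open scoped Kronecker Quaternion

noncomputable section

namespace FrancisAux

/-- the weight used for block-triangularity -/
def bwt {n : ℕ} : Fin 4 × Fin n → ℕ := fun p => 4 * (p.2 : ℕ) + (p.1 : ℕ)

lemma conj_apply {m n : ℕ} (B : Matrix (Fin 4) (Fin 4) ℝ)
    (M : Matrix (Fin 4 × Fin m) (Fin 4 × Fin n) ℝ) (a b : Fin 4) (i : Fin m) (j : Fin n) :
    ((B ⊗ₖ (1 : Matrix (Fin m) (Fin m) ℝ)) * M * ((B ⊗ₖ (1 : Matrix (Fin n) (Fin n) ℝ)))ᵀ)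
      (a, i) (b, j)
    = ∑ c : Fin 4, ∑ d : Fin 4, B a c * B b d * M (c, i) (d, j) := by
  simp only [mul_apply, transpose_apply, kroneckerMap_apply, one_apply, Fintype.sum_prod_type,
    mul_ite, mul_one, mul_zero, ite_mul, zero_mul, Finset.sum_ite_eq, Finset.sum_ite_eq',
    Finset.mem_univ, if_true]
  simp only [Finset.sum_mul]
  rw [Finset.sum_comm]
  exact Finset.sum_congr rfl fun c _ => Finset.sum_congr rfl fun d _ => by ring

lemma rel_eval {m n : ℕ} {B : Matrix (Fin 4) (Fin 4) ℝ}
    {M : Matrix (Fin 4 × Fin m) (Fin 4 × Fin n) ℝ}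
    (h : (B ⊗ₖ (1 : Matrix (Fin m) (Fin m) ℝ)) * M
        * ((B ⊗ₖ (1 : Matrix (Fin n) (Fin n) ℝ)))ᵀ = M)
    (a b : Fin 4) (i : Fin m) (j : Fin n) :
    M (a, i) (b, j) = ∑ c : Fin 4, ∑ d : Fin 4, B a c * B b d * M (c, i) (d, j) := by
  conv_lhs => rw [← h]
  exact conj_apply B M a b i j

lemma base_orth (B : Matrix (Fin 4) (Fin 4) ℝ) (hB : B * Bᵀ = 1) (n : ℕ) :
    (B ⊗ₖ (1 : Matrix (Fin n) (Fin n) ℝ)) * (B ⊗ₖ (1 : Matrix (Fin n) (Fin n) ℝ))ᵀ = 1 := by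
  rw [← kroneckerMap_transpose, ← Matrix.mul_kronecker_mul, hB, transpose_one, Matrix.mul_one,
    Matrix.one_kronecker_one]

lemma Jb_orth : Jb * Jbᵀ = 1 := by
  refine Matrix.ext fun i j => ?_
  fin_cases i <;> fin_cases j <;>
    simp [Jb, Matrix.mul_apply, Fin.sum_univ_four, Matrix.one_apply,
      Matrix.transpose_apply, Matrix.vecHead, Matrix.vecTail]

lemma Rb_orth : Rb * Rbᵀ = 1 := by
  refine Matrix.ext fun i j => ?_
  fin_cases i <;> fin_cases j <;>
    simp [Rb, Matrix.mul_apply, Fin.sum_univ_four, Matrix.one_apply,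
      Matrix.transpose_apply, Matrix.vecHead, Matrix.vecTail]

lemma Sb_orth : Sb * Sbᵀ = 1 := by
  refine Matrix.ext fun i j => ?_
  fin_cases i <;> fin_cases j <;>
    simp [Sb, Matrix.mul_apply, Fin.sum_univ_four, Matrix.one_apply,
      Matrix.transpose_apply, Matrix.vecHead, Matrix.vecTail]

lemma conj_prod {n : ℕ} {A B S : Matrix (Fin 4 × Fin n) (Fin 4 × Fin n) ℝ}
    (hS : S * Sᵀ = 1) (h1 : S * A * Sᵀ = A) (h2 : S * B * Sᵀ = B) :
    S * (A * B) * Sᵀ = A * B := by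
  have hS' : Sᵀ * S = 1 := mul_eq_one_comm.mp hS
  conv_rhs => rw [← h1, ← h2]
  simp only [Matrix.mul_assoc]
  rw [← Matrix.mul_assoc Sᵀ S, hS', Matrix.one_mul]

lemma conj_inv {n : ℕ} {A S : Matrix (Fin 4 × Fin n) (Fin 4 × Fin n) ℝ}
    (hS : S * Sᵀ = 1) (h1 : S * A * Sᵀ = A) :
    S * A⁻¹ * Sᵀ = A⁻¹ := by
  have hSi : S⁻¹ = Sᵀ := Matrix.inv_eq_right_inv hS
  have hSti : Sᵀ⁻¹ = S := Matrix.inv_eq_right_inv (mul_eq_one_comm.mp hS)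
  conv_rhs => rw [← h1]
  rw [Matrix.mul_inv_rev, Matrix.mul_inv_rev, hSi, hSti, Matrix.mul_assoc]

lemma jrs_mul {n : ℕ} {A B : Matrix (Fin 4 × Fin n) (Fin 4 × Fin n) ℝ}
    (hA : JRSSymmetric A) (hB : JRSSymmetric B) : JRSSymmetric (A * B) :=
  ⟨conj_prod (base_orth Jb Jb_orth n) hA.1 hB.1,
   conj_prod (base_orth Rb Rb_orth n) hA.2.1 hB.2.1,
   conj_prod (base_orth Sb Sb_orth n) hA.2.2 hB.2.2⟩

lemma jrs_inv {n : ℕ} {A : Matrix (Fin 4 × Fin n) (Fin 4 × Fin n) ℝ}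
    (hA : JRSSymmetric A) : JRSSymmetric A⁻¹ :=
  ⟨conj_inv (base_orth Jb Jb_orth n) hA.1,
   conj_inv (base_orth Rb Rb_orth n) hA.2.1,
   conj_inv (base_orth Sb Sb_orth n) hA.2.2⟩

lemma upsilon_jrs {m n : ℕ} (Q0 Q1 Q2 Q3 : Matrix (Fin m) (Fin n) ℝ) :
    JRSSymmetric (upsilonBlocks Q0 Q1 Q2 Q3) := by
  refine ⟨?_, ?_, ?_⟩
  · refine Matrix.ext fun p q => ?_
    obtain ⟨a, i⟩ := p; obtain ⟨b, j⟩ := q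
    simp only [JJ]
    rw [conj_apply]
    fin_cases a <;> fin_cases b <;>
      simp [Jb, upsilonBlocks, Fin.sum_univ_four]
  · refine Matrix.ext fun p q => ?_
    obtain ⟨a, i⟩ := p; obtain ⟨b, j⟩ := q
    simp only [RRm]
    rw [conj_apply]
    fin_cases a <;> fin_cases b <;>
      simp [Rb, upsilonBlocks, Fin.sum_univ_four]
  · refine Matrix.ext fun p q => ?_
    obtain ⟨a, i⟩ := p; obtain ⟨b, j⟩ := q
    simp only [SSm]
    rw [conj_apply]
    fin_cases a <;> fin_cases b <;>
      simp [Sb, upsilonBlocks, Fin.sum_univ_four]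

lemma jrs_upsilon {m n : ℕ} {M : Matrix (Fin 4 × Fin m) (Fin 4 × Fin n) ℝ}
    (h : JRSSymmetric M) :
    M = upsilonBlocks (fun i j => M (0, i) (0, j)) (fun i j => M (0, i) (2, j))
        (fun i j => M (0, i) (1, j)) (fun i j => M (0, i) (3, j)) := by
  obtain ⟨hJ, hR, hS⟩ := h
  simp only [JJ, RRm, SSm] at hJ hR hS
  refine Matrix.ext fun p q => ?_
  obtain ⟨a, i⟩ := p; obtain ⟨b, j⟩ := q
  fin_cases a <;> fin_cases b <;>
    first
    | rfl
    | (rw [rel_eval hR]; simp [Rb, upsilonBlocks, Fin.sum_univ_four]; done)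
    | (rw [rel_eval hJ]; simp [Jb, upsilonBlocks, Fin.sum_univ_four]; done)
    | (rw [rel_eval hS]; simp [Sb, upsilonBlocks, Fin.sum_univ_four]; done)

lemma upsilon_bt {n : ℕ} {R0 R1 R2 R3 : Matrix (Fin n) (Fin n) ℝ}
    (h0 : UpperTriangularM R0) (h1 : StrictlyUpperTriangularM R1)
    (h2 : StrictlyUpperTriangularM R2) (h3 : StrictlyUpperTriangularM R3) :
    BlockTriangular (upsilonBlocks R0 R1 R2 R3) bwt := by
  rintro ⟨a, i⟩ ⟨b, j⟩ h
  simp only [bwt] at h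
  fin_cases a <;> fin_cases b <;>
    simp only [Fin.isValue, Fin.val_zero, Fin.val_one, Fin.val_two, Fin.mk_zero, Fin.mk_one,
      show ((3 : Fin 4) : ℕ) = 3 from rfl, show ((2 : Fin 4) : ℕ) = 2 from rfl] at h <;>
    first
    | (simp [upsilonBlocks, Matrix.vecHead, Matrix.vecTail, h0 i j (by omega),
        h1 i j (by omega), h2 i j (by omega), h3 i j (by omega)]; done)
    | (simp [upsilonBlocks, Matrix.vecHead, Matrix.vecTail, h1 i j (by omega),
        h2 i j (by omega), h3 i j (by omega)]; done)

lemma upsilon_hess {n : ℕ} {H0 H1 H2 H3 : Matrix (Fin n) (Fin n) ℝ}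
    (hh : UpperHessenbergM H0) (h1 : UpperTriangularM H1)
    (h2 : UpperTriangularM H2) (h3 : UpperTriangularM H3) :
    ∀ p q, bwt q + 4 < bwt p → upsilonBlocks H0 H1 H2 H3 p q = 0 := by
  rintro ⟨a, i⟩ ⟨b, j⟩ h
  simp only [bwt] at h
  fin_cases a <;> fin_cases b <;>
    simp only [Fin.isValue, Fin.val_zero, Fin.val_one, Fin.val_two, Fin.mk_zero, Fin.mk_one,
      show ((3 : Fin 4) : ℕ) = 3 from rfl, show ((2 : Fin 4) : ℕ) = 2 from rfl] at h <;>
    first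
    | (simp [upsilonBlocks, Matrix.vecHead, Matrix.vecTail, hh i j (by omega),
        h1 i j (by omega), h2 i j (by omega), h3 i j (by omega)]; done)
    | (simp [upsilonBlocks, Matrix.vecHead, Matrix.vecTail, h1 i j (by omega),
        h2 i j (by omega), h3 i j (by omega)]; done)

lemma shifted_mul {n : ℕ} {A H B : Matrix (Fin 4 × Fin n) (Fin 4 × Fin n) ℝ}
    (hA : BlockTriangular A bwt) (hH : ∀ p q, bwt q + 4 < bwt p → H p q = 0)
    (hB : BlockTriangular B bwt) :
    ∀ p q, bwt q + 4 < bwt p → (A * H * B) p q = 0 := by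
  intro p q h
  rw [Matrix.mul_apply]
  refine Finset.sum_eq_zero fun v _ => ?_
  by_cases hv : bwt q < bwt v
  · rw [hB hv, mul_zero]
  · have hAH : (A * H) p v = 0 := by
      rw [Matrix.mul_apply]
      refine Finset.sum_eq_zero fun u _ => ?_
      by_cases hu : bwt u < bwt p
      · rw [hA hu, zero_mul]
      · rw [hH u v (by omega), mul_zero]
    rw [hAH, zero_mul]

end FrancisAux

open FrancisAux in
/-- Preservation of the upper JRS-Hessenberg form under the
Francis double-shift step. -/
theorem francis_step_preserves_hessenberg {n : ℕ}
    (H W R C : Matrix (Fin 4 × Fin n) (Fin 4 × Fin n) ℝ)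
    (H0 H1 H2 H3 R0 R1 R2 R3 : Matrix (Fin n) (Fin n) ℝ)
    (hHblocks : H = upsilonBlocks H0 H1 H2 H3)
    (hHhess : UpperHessenbergM H0 ∧ UpperTriangularM H1 ∧
      UpperTriangularM H2 ∧ UpperTriangularM H3)
    (hUnred : ∀ (s : ℕ) (h : s + 1 < n), H0 ⟨s + 1, h⟩ ⟨s, by omega⟩ ≠ 0)
    (κ : ℂ)
    (hC : C = H * H - (2 * κ.re) • H + (‖κ‖ ^ 2) • 1)
    (hCinv : IsUnit C)
    (hW : OrthoJRSSymplectic W)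
    (hRblocks : R = upsilonBlocks R0 R1 R2 R3)
    (hRtri : UpperTriangularM R0 ∧ StrictlyUpperTriangularM R1 ∧
      StrictlyUpperTriangularM R2 ∧ StrictlyUpperTriangularM R3)
    (hQR : C = W * R) :
    ∃ G0 G1 G2 G3 : Matrix (Fin n) (Fin n) ℝ,
      Wᵀ * H * W = upsilonBlocks G0 G1 G2 G3 ∧
      UpperHessenbergM G0 ∧
      UpperTriangularM G1 ∧ UpperTriangularM G2 ∧ UpperTriangularM G3 := by
  -- algebra: Ĥ = R H R⁻¹
  have hWt : Wᵀ * W = 1 := hW.1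
  have hRW : R = Wᵀ * C := by rw [hQR, ← Matrix.mul_assoc, hWt, Matrix.one_mul]
  have hWtU : IsUnit Wᵀ := by
    have h := invertibleOfRightInverse Wᵀ W hWt
    exact @isUnit_of_invertible _ _ _ h
  have hRunit : IsUnit R := by rw [hRW]; exact hWtU.mul hCinv
  have hRdet : IsUnit R.det := (Matrix.isUnit_iff_isUnit_det R).mp hRunit
  have hRR : R * R⁻¹ = 1 := Matrix.mul_nonsing_inv R hRdet
  have hW_eq : W = C * R⁻¹ := by rw [hQR, Matrix.mul_assoc, hRR, Matrix.mul_one]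
  have hCH : C * H = H * C := by
    rw [hC]
    simp only [Matrix.sub_mul, Matrix.add_mul, Matrix.mul_sub, Matrix.mul_add,
      Matrix.smul_mul, Matrix.mul_smul, Matrix.one_mul, Matrix.mul_one, Matrix.mul_assoc]
  have hHhat : Wᵀ * H * W = R * H * R⁻¹ := by
    calc Wᵀ * H * W = Wᵀ * H * (C * R⁻¹) := by rw [← hW_eq]
    _ = Wᵀ * (H * C) * R⁻¹ := by simp only [Matrix.mul_assoc]
    _ = Wᵀ * (C * H) * R⁻¹ := by rw [hCH]
    _ = (Wᵀ * C) * (H * R⁻¹) := by simp only [Matrix.mul_assoc]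
    _ = R * H * R⁻¹ := by rw [← hRW, Matrix.mul_assoc]
  -- structure
  have hHjrs : JRSSymmetric H := by rw [hHblocks]; exact upsilon_jrs H0 H1 H2 H3
  have hRjrs : JRSSymmetric R := by rw [hRblocks]; exact upsilon_jrs R0 R1 R2 R3
  have hhat_jrs : JRSSymmetric (R * H * R⁻¹) := jrs_mul (jrs_mul hRjrs hHjrs) (jrs_inv hRjrs)
  have hRbt : BlockTriangular R bwt := by
    rw [hRblocks]; exact upsilon_bt hRtri.1 hRtri.2.1 hRtri.2.2.1 hRtri.2.2.2
  haveI : Invertible R := R.invertibleOfIsUnitDet hRdet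
  have hRibt : BlockTriangular R⁻¹ bwt := Matrix.blockTriangular_inv_of_blockTriangular hRbt
  have hHsh : ∀ p q, bwt q + 4 < bwt p → H p q = 0 := by
    rw [hHblocks]; exact upsilon_hess hHhess.1 hHhess.2.1 hHhess.2.2.1 hHhess.2.2.2
  have hhat_sh : ∀ p q, bwt q + 4 < bwt p → (R * H * R⁻¹) p q = 0 :=
    shifted_mul hRbt hHsh hRibt
  have hup := jrs_upsilon hhat_jrs
  rw [hHhat]
  refine ⟨_, _, _, _, hup, ?_, ?_, ?_, ?_⟩
  · -- G0 Hessenberg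
    intro i j hij
    exact hhat_sh (0, i) (0, j) (by simp [bwt]; omega)
  · -- G1 = Ĥ(0,·)(2,·) upper triangular, via entry (2,i)(0,j)
    intro i j hij
    have hz := hhat_sh (2, i) (0, j) (by simp [bwt]; omega)
    rw [hup] at hz
    simpa [upsilonBlocks, Matrix.vecHead, Matrix.vecTail, neg_eq_zero] using hz
  · intro i j hij
    have hz := hhat_sh (1, i) (0, j) (by simp [bwt]; omega)
    rw [hup] at hz
    simpa [upsilonBlocks, Matrix.vecHead, Matrix.vecTail, neg_eq_zero] using hz
  · intro i j hij
    have hz := hhat_sh (3, i) (0, j) (by simp [bwt]; omega)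
    rw [hup] at hz
    simpa [upsilonBlocks, Matrix.vecHead, Matrix.vecTail, neg_eq_zero] using hz
end
end

section
/- (Generalized quaternion Givens transformation.) Let x = (x₁, x₂)ᵀ ∈ ℍ² with x₂ ≠ 0, and set ‖x‖ = sqrt(|x₁|² + |x₂|²). Define g₁₁ = x₁/‖x‖ and g₂₁ = x₂/‖x‖, and define g₁₂, g₂₂ as follows: if |x₁| ≤ |x₂|, set g₁₂ = |g₂₁| and g₂₂ = −|g₂₁| · (conj(g₂₁))⁻¹ · conj(g₁₁); if |x₁| > |x₂|, set g₂₂ = |g₁₁| and g₁₂ = −|g₁₁| · (conj(g₁₁))⁻¹ · conj(g₂₁). Then the quaternion matrix G₂ = [[g₁₁, g₁₂],[g₂₁, g₂₂]] is unitary (G₂* G₂ = I, where G₂* is the quaternion conjugate transpose) and G₂* x = (‖x‖, 0)ᵀ. -/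
open Matrix Quaternion
open scoped Kronecker Quaternion

noncomputable section

/-! Write the first column of `G` as `(a, b)` with `‖a‖² + ‖b‖² = 1` and `b = ‖b‖ u`, `‖u‖ = 1`.
Since `‖b‖ (star b)⁻¹ = u`, the second column is `(‖b‖, -u (star a))`, a unit vector orthogonal to
`(a, b)`. When `‖x₁‖ > ‖x₂‖` the matrix is the same construction with its rows swapped, which does
not change `Gᴴ G`. Finally `x = G (‖x‖, 0)ᵀ`, so unitarity gives `Gᴴ x = (‖x‖, 0)ᵀ`. -/

namespace Quaternion

lemma star_mul_self_add_star_mul_self (a b : ℍ[ℝ]) :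
    star a * a + star b * b = ((‖a‖ ^ 2 + ‖b‖ ^ 2 : ℝ) : ℍ[ℝ]) := by
  rw [star_mul_self, star_mul_self, normSq_eq_norm_mul_self, normSq_eq_norm_mul_self]
  push_cast [sq]
  rfl

lemma star_mul_self_eq_one {u : ℍ[ℝ]} (hu : ‖u‖ = 1) : star u * u = 1 := by
  rw [star_mul_self, normSq_eq_norm_mul_self, hu, mul_one, coe_one]

lemma coe_norm_mul_inv_star (b : ℍ[ℝ]) :
    (‖b‖ : ℍ[ℝ]) * (star b)⁻¹ = (‖b‖⁻¹ : ℝ) * b := by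
  rw [inv_def, normSq_star, star_star, coe_mul_eq_smul, coe_mul_eq_smul, smul_smul,
    normSq_eq_norm_mul_self, mul_inv, ← mul_assoc]
  rcases eq_or_ne ‖b‖ 0 with h | h
  · simp [h]
  · rw [mul_inv_cancel₀ h, one_mul]

end Quaternion

namespace Matrix

lemma conjTranspose_mul_self_fin_two {α : Type*} [Star α] [AddCommMonoid α] [Mul α]
    (a b c d : α) :
    (!![a, b; c, d])ᴴ * !![a, b; c, d] =
      !![star a * a + star c * c, star a * b + star c * d;
        star b * a + star d * c, star b * b + star d * d] := by
  rw [← mul_fin_two]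
  congr 1
  ext i j
  fin_cases i <;> fin_cases j <;> rfl

lemma conjTranspose_mul_self_swap_rows {α : Type*} [Star α] [AddCommMonoid α] [Mul α]
    (a b c d : α) :
    (!![c, d; a, b])ᴴ * !![c, d; a, b] = (!![a, b; c, d])ᴴ * !![a, b; c, d] := by
  simp only [conjTranspose_mul_self_fin_two, add_comm]

end Matrix

namespace Quaternion

lemma givens_conjTranspose_mul_self_of_norm_eq_one (a u : ℍ[ℝ]) (r : ℝ) (hu : ‖u‖ = 1)
    (h : ‖a‖ ^ 2 + r ^ 2 = 1) :
    (!![a, (r : ℍ[ℝ]); r * u, -(u * star a)])ᴴ * !![a, (r : ℍ[ℝ]); r * u, -(u * star a)] = 1 := by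
  have hu_cancel : ∀ x, star u * (u * x) = x := fun x => by
    rw [← mul_assoc, star_mul_self_eq_one hu, one_mul]
  have hr : ‖(r : ℍ[ℝ])‖ ^ 2 = r ^ 2 := by rw [norm_coe, Real.norm_eq_abs, sq_abs]
  have h00 : star a * a + star (r * u) * (r * u) = 1 := by
    rw [star_mul_self_add_star_mul_self, norm_mul, hu, mul_one, hr, h, coe_one]
  have h11 : star (r : ℍ[ℝ]) * r + star (-(u * star a)) * -(u * star a) = 1 := by
    rw [star_mul_self_add_star_mul_self, norm_neg, norm_mul, hu, one_mul, Quaternion.norm_star, hr,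
      add_comm, h, coe_one]
  have h01 : star a * r + star (r * u) * -(u * star a) = 0 := by
    rw [star_mul, star_coe, mul_assoc, coe_mul_eq_smul, mul_smul_comm, mul_neg, hu_cancel,
      mul_coe_eq_smul, smul_neg, add_neg_cancel]
  have h10 : star (r : ℍ[ℝ]) * a + star (-(u * star a)) * (r * u) = 0 := by
    simp only [star_mul, star_neg, star_star, star_coe, neg_mul, mul_assoc, coe_commutes, hu_cancel,
      add_neg_cancel]
  rw [conjTranspose_mul_self_fin_two, one_fin_two, h00, h01, h10, h11]

lemma givens_conjTranspose_mul_self (a b : ℍ[ℝ]) (hb : b ≠ 0) (h : ‖a‖ ^ 2 + ‖b‖ ^ 2 = 1) :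
    (!![a, (‖b‖ : ℍ[ℝ]); b, -(‖b‖ * (star b)⁻¹ * star a)])ᴴ *
      !![a, (‖b‖ : ℍ[ℝ]); b, -(‖b‖ * (star b)⁻¹ * star a)] = 1 := by
  have hb_norm : ‖b‖ ≠ 0 := norm_ne_zero_iff.mpr hb
  have hu : ‖((‖b‖⁻¹ : ℝ) : ℍ[ℝ]) * b‖ = 1 := by
    rw [norm_mul, norm_coe, norm_inv, norm_norm, inv_mul_cancel₀ hb_norm]
  have hb_eq : (‖b‖ : ℍ[ℝ]) * ((‖b‖⁻¹ : ℝ) * b) = b := by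
    rw [← mul_assoc, ← coe_mul, mul_inv_cancel₀ hb_norm, coe_one, one_mul]
  have := givens_conjTranspose_mul_self_of_norm_eq_one a _ ‖b‖ hu h
  rwa [hb_eq, ← coe_norm_mul_inv_star] at this

lemma norm_div_sqrt_sq_add_norm_div_sqrt_sq (x y : ℍ[ℝ]) (hy : y ≠ 0) :
    ‖x / (√(‖x‖ ^ 2 + ‖y‖ ^ 2) : ℍ[ℝ])‖ ^ 2 + ‖y / (√(‖x‖ ^ 2 + ‖y‖ ^ 2) : ℍ[ℝ])‖ ^ 2 = 1 := by
  have hpos : 0 < ‖x‖ ^ 2 + ‖y‖ ^ 2 := by positivity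
  rw [norm_div, norm_div, norm_coe, Real.norm_eq_abs, abs_of_pos (Real.sqrt_pos.mpr hpos), div_pow,
    div_pow, Real.sq_sqrt hpos.le, ← add_div, div_self hpos.ne']

end Quaternion

open Quaternion

/-- The generalized quaternion Givens transformation `G₂` is
unitary and maps `x` to `(‖x‖, 0)ᵀ`. -/
theorem generalized_quaternion_givens (x1 x2 : ℍ[ℝ]) (hx2 : x2 ≠ 0) :
    let nx : ℝ := Real.sqrt (‖x1‖ ^ 2 + ‖x2‖ ^ 2)
    let g11 : ℍ[ℝ] := x1 / (nx : ℍ[ℝ])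
    let g21 : ℍ[ℝ] := x2 / (nx : ℍ[ℝ])
    let g12 : ℍ[ℝ] :=
      if ‖x1‖ ≤ ‖x2‖ then ((‖g21‖ : ℝ) : ℍ[ℝ])
      else -(((‖g11‖ : ℝ) : ℍ[ℝ]) * (star g11)⁻¹ * star g21)
    let g22 : ℍ[ℝ] :=
      if ‖x1‖ ≤ ‖x2‖ then -(((‖g21‖ : ℝ) : ℍ[ℝ]) * (star g21)⁻¹ * star g11)
      else ((‖g11‖ : ℝ) : ℍ[ℝ])
    let G : Matrix (Fin 2) (Fin 2) ℍ[ℝ] := !![g11, g12; g21, g22]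
    Gᴴ * G = 1 ∧ Gᴴ *ᵥ ![x1, x2] = ![((nx : ℝ) : ℍ[ℝ]), 0] := by
  intro nx g11 g21 g12 g22 G
  have hnx : (nx : ℍ[ℝ]) ≠ 0 := by
    rw [Ne, ← coe_zero, coe_inj]
    exact (Real.sqrt_pos.mpr (by positivity)).ne'
  have hg : ‖g11‖ ^ 2 + ‖g21‖ ^ 2 = 1 := norm_div_sqrt_sq_add_norm_div_sqrt_sq x1 x2 hx2
  have hunitary : Gᴴ * G = 1 := by
    by_cases hc : ‖x1‖ ≤ ‖x2‖
    · simp only [G, g12, g22, if_pos hc]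
      exact givens_conjTranspose_mul_self g11 g21 (div_ne_zero hx2 hnx) hg
    · have hx1 : x1 ≠ 0 := by
        rintro rfl
        exact hc (by simp)
      simp only [G, g12, g22, if_neg hc]
      rw [← conjTranspose_mul_self_swap_rows]
      exact givens_conjTranspose_mul_self g21 g11 (div_ne_zero hx1 hnx) (by rw [add_comm, hg])
  have hx : G *ᵥ ![(nx : ℍ[ℝ]), 0] = ![x1, x2] := by
    funext i
    fin_cases i <;> simp [G, g11, g21, mulVec, dotProduct, Fin.sum_univ_two, hnx]
  refine ⟨hunitary, ?_⟩
  rw [← hx, mulVec_mulVec, hunitary, one_mulVec]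
end
end
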